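/- The pentagram map commutes with the rescaling operation: for every real t ≠ 0 and every (x, y) with all denominators nonvanishing, the pentagram map in corner coordinates applied to the rescaled point (t·x_i, t⁻¹·y_i) equals the rescaling of the image; that is, for all i ∈ ZMod n, T*x_i computed from (t·x, t⁻¹·y) equals t·(T*x_i computed from (x, y)), and T*y_i computed from (t·x, t⁻¹·y) equals t⁻¹·(T*y_i computed from (x, y)). -/

import Mathlib

/-- The pentagram map in corner coordinates: `T*x_i`. -/
noncomputable def pentX {n : ℕ} (x y : ZMod n → ℝ) (i : ZMod n) : ℝ :=
  x i * (1 - x (i - 1) * y (i - 1)) / (1 - x (i + 1) * y (i + 1))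

/-- The pentagram map in corner coordinates: `T*y_i`. -/
noncomputable def pentY {n : ℕ} (x y : ZMod n → ℝ) (i : ZMod n) : ℝ :=
  y (i + 1) * (1 - x (i + 2) * y (i + 2)) / (1 - x i * y i)

/-! Each coordinate of the image is a single `x_i` or `y_{i+1}` times a ratio of expressions in the
products `x_j y_j`, and the rescaling fixes every product `x_j y_j`. -/

theorem mul_mul_inv_mul_cancel_left₀ {G : Type*} [CommGroupWithZero G] {t : G} (ht : t ≠ 0)
    (a b : G) :
    t * a * (t⁻¹ * b) = a * b := by
  rw [mul_mul_mul_comm, mul_inv_cancel₀ ht, one_mul]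

section Rescaling

variable {n : ℕ} (x y : ZMod n → ℝ) {t : ℝ}

theorem pentX_rescale (ht : t ≠ 0) (i : ZMod n) :
    pentX (fun j => t * x j) (fun j => t⁻¹ * y j) i = t * pentX x y i := by
  simp only [pentX, mul_mul_inv_mul_cancel_left₀ ht]
  ring

theorem pentY_rescale (ht : t ≠ 0) (i : ZMod n) :
    pentY (fun j => t * x j) (fun j => t⁻¹ * y j) i = t⁻¹ * pentY x y i := by
  simp only [pentY, mul_mul_inv_mul_cancel_left₀ ht]
  ring

end Rescaling

theorem stmt_1 (n : ℕ) (x y : ZMod n → ℝ)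
    (t : ℝ) (ht : t ≠ 0) :
    ∀ i : ZMod n,
      pentX (fun j => t * x j) (fun j => t⁻¹ * y j) i = t * pentX x y i ∧
      pentY (fun j => t * x j) (fun j => t⁻¹ * y j) i = t⁻¹ * pentY x y i :=
  fun i => ⟨pentX_rescale x y ht i, pentY_rescale x y ht i⟩
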